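/- arXiv:math/0101042 — 6 statements merged into one kernel-verified Lean document; each statement's English description precedes it below -/
import Mathlib

section
/- Generalized de la Vallée–Poussin theorem: Let [A,B] be a real segment with A < B, let f : [A,B] → ℝ be continuous, and let m, n be nonnegative integers. Let P̃, Q̃ be coprime real polynomials with deg P̃ = n − ν and deg Q̃ = m − μ for some integers 0 ≤ ν ≤ n and 0 ≤ μ ≤ m, such that Q̃ has no zeros on [A,B]; set R̃ = P̃/Q̃ and d = min(μ, ν). Suppose there exist N = m + n + 2 − d points x₁ < x₂ < ⋯ < x_N in [A,B] such that all the values f(x_k) − R̃(x_k) are nonzero and consecutive values have opposite signs. Then every rational function R of type (n,m) on [A,B] satisfies sup_{x∈[A,B]} |f(x) − R(x)| ≥ min_{1≤k≤N} |f(x_k) − R̃(x_k)|. -/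
lemma dlvp_samesign {A B : ℝ} {s : ℝ → ℝ} (hc : ContinuousOn s (Set.Icc A B))
    (hs : ∀ x ∈ Set.Icc A B, s x ≠ 0) {u v : ℝ} (hu : u ∈ Set.Icc A B)
    (hv : v ∈ Set.Icc A B) : 0 < s u * s v := by
  rcases lt_trichotomy (s u * s v) 0 with h | h | h
  · exfalso
    have hsub : Set.uIcc u v ⊆ Set.Icc A B := Set.ordConnected_Icc.uIcc_subset hu hv
    have h0 : (0:ℝ) ∈ Set.uIcc (s u) (s v) := by
      rcases mul_neg_iff.mp h with ⟨h1, h2⟩ | ⟨h1, h2⟩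
      · exact Set.mem_uIcc.mpr (Or.inr ⟨h2.le, h1.le⟩)
      · exact Set.mem_uIcc.mpr (Or.inl ⟨h1.le, h2.le⟩)
    obtain ⟨c, hc1, hc2⟩ := intermediate_value_uIcc (hc.mono hsub) h0
    exact hs c (hsub hc1) hc2
  · exfalso
    rcases mul_eq_zero.mp h with h | h
    exacts [hs u hu h, hs v hv h]
  · exact h

/-- A rational function of type (n,m) on [A,B]: a quotient of real polynomials
with numerator degree ≤ n, denominator degree ≤ m, denominator nonvanishing on [A,B]. -/
def IsRatFun (A B : ℝ) (n m : ℕ) (R : ℝ → ℝ) : Prop :=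
  ∃ P Q : Polynomial ℝ, P.natDegree ≤ n ∧ Q.natDegree ≤ m ∧
    (∀ x ∈ Set.Icc A B, Q.eval x ≠ 0) ∧
    ∀ x ∈ Set.Icc A B, R x = P.eval x / Q.eval x

/-- Generalized de la Vallée–Poussin theorem. -/
theorem generalized_de_la_Vallee_Poussin
    (A B : ℝ) (hAB : A < B) (f : ℝ → ℝ) (hf : ContinuousOn f (Set.Icc A B))
    (m n ν μ : ℕ) (hν : ν ≤ n) (hμ : μ ≤ m)
    (Pt Qt : Polynomial ℝ) (hcop : IsCoprime Pt Qt)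
    (hPdeg : Pt.natDegree = n - ν) (hQdeg : Qt.natDegree = m - μ)
    (hQne : ∀ x ∈ Set.Icc A B, Qt.eval x ≠ 0)
    (Rt : ℝ → ℝ) (hRt : ∀ x, Rt x = Pt.eval x / Qt.eval x)
    (N : ℕ) (hN : N = m + n + 2 - min μ ν)
    (x : ℕ → ℝ) (hmono : ∀ k l, k < l → l < N → x k < x l)
    (hmem : ∀ k < N, x k ∈ Set.Icc A B)
    (hne : ∀ k < N, f (x k) - Rt (x k) ≠ 0)
    (halt : ∀ k, k + 1 < N →
      (f (x k) - Rt (x k)) * (f (x (k + 1)) - Rt (x (k + 1))) < 0)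
    (R : ℝ → ℝ) (hR : IsRatFun A B n m R) :
    (⨅ k : Fin N, |f (x k) - Rt (x k)|) ≤ ⨆ y : Set.Icc A B, |f y.1 - R y.1| := by
  classical
  obtain ⟨P, Q, hPd, hQd, hQne', hRdef⟩ := hR
  have hdm : min μ ν ≤ m := le_trans (min_le_left _ _) hμ
  have hdn : min μ ν ≤ n := le_trans (min_le_right _ _) hν
  have hN2 : 2 ≤ N := by omega
  by_contra hcon
  push_neg at hcon
  set ε := ⨅ k : Fin N, |f (x k) - Rt (x k)| with hε
  set S := ⨆ y : Set.Icc A B, |f y.1 - R y.1| with hS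
  have hεle : ∀ k, k < N → ε ≤ |f (x k) - Rt (x k)| := by
    intro k hk
    exact ciInf_le (Finite.bddBelow_range _) (⟨k, hk⟩ : Fin N)
  have hBdd : BddAbove (Set.range fun y : Set.Icc A B => |f y.1 - R y.1|) := by
    have hRc : ContinuousOn (fun y => |f y - P.eval y / Q.eval y|) (Set.Icc A B) :=
      (hf.sub ((Polynomial.continuous P).continuousOn.div
        (Polynomial.continuous Q).continuousOn hQne')).abs
    obtain ⟨C, hC⟩ := (isCompact_Icc.image_of_continuousOn hRc).bddAbove
    refine ⟨C, ?_⟩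
    rintro v ⟨yy, rfl⟩
    refine hC ⟨yy.1, yy.2, ?_⟩
    show |f yy.1 - Polynomial.eval yy.1 P / Polynomial.eval yy.1 Q| = |f yy.1 - R yy.1|
    rw [hRdef yy.1 yy.2]
  have hgle : ∀ k, k < N → |f (x k) - R (x k)| ≤ S := by
    intro k hk
    exact le_ciSup hBdd (⟨x k, hmem k hk⟩ : Set.Icc A B)
  -- strict comparison at each node
  have hlt : ∀ k, k < N → |f (x k) - R (x k)| < |f (x k) - Rt (x k)| :=
    fun k hk => lt_of_le_of_lt (hgle k hk) (lt_of_lt_of_le hcon (hεle k hk))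
  -- sign agreement
  have hsign : ∀ k, k < N → 0 < (f (x k) - Rt (x k)) * (R (x k) - Rt (x k)) := by
    intro k hk
    have key := hlt k hk
    set e := f (x k) - Rt (x k)
    set g := f (x k) - R (x k)
    have hR1 : R (x k) - Rt (x k) = e - g := by ring
    rw [hR1]
    have hepos : 0 < |e| := lt_of_le_of_lt (abs_nonneg g) key
    nlinarith [mul_pos hepos (sub_pos.mpr key), le_abs_self (e * g), abs_mul e g,
      sq_abs e, abs_nonneg g, abs_nonneg e, sq_abs g]
  -- the difference polynomial
  set D : Polynomial ℝ := P * Qt - Pt * Q with hDdef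
  have hDdeg : D.natDegree ≤ n + m - min μ ν := by
    refine le_trans (Polynomial.natDegree_sub_le _ _) (max_le ?_ ?_)
    · exact le_trans (Polynomial.natDegree_mul_le) (by omega : P.natDegree + Qt.natDegree ≤ n + m - min μ ν)
    · exact le_trans (Polynomial.natDegree_mul_le) (by omega : Pt.natDegree + Q.natDegree ≤ n + m - min μ ν)
  have hDeval : ∀ k, k < N → D.eval (x k)
      = (R (x k) - Rt (x k)) * (Q.eval (x k) * Qt.eval (x k)) := by
    intro k hk
    have hq := hQne' (x k) (hmem k hk)
    have hqt := hQne (x k) (hmem k hk)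
    rw [hDdef, hRdef (x k) (hmem k hk), hRt (x k)]
    simp only [Polynomial.eval_sub, Polynomial.eval_mul]
    field_simp
  -- alternation of D
  have hss : ∀ k l, k < N → l < N →
      0 < (Q.eval (x k) * Qt.eval (x k)) * (Q.eval (x l) * Qt.eval (x l)) := by
    intro k l hk hl
    exact dlvp_samesign (s := fun y => Q.eval y * Qt.eval y)
      ((Polynomial.continuous Q).continuousOn.mul (Polynomial.continuous Qt).continuousOn)
      (fun y hy => mul_ne_zero (hQne' y hy) (hQne y hy)) (hmem k hk) (hmem l hl)
  have hDalt : ∀ k, k + 1 < N → D.eval (x k) * D.eval (x (k + 1)) < 0 := by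
    intro k hk1
    have hk : k < N := by omega
    have h1 := hsign k hk
    have h2 := hsign (k + 1) hk1
    have h3 := halt k hk1
    have h4 := hss k (k + 1) hk hk1
    have hrr : (R (x k) - Rt (x k)) * (R (x (k + 1)) - Rt (x (k + 1))) < 0 := by
      nlinarith [mul_pos h1 h2]
    rw [hDeval k hk, hDeval (k + 1) hk1]
    nlinarith [mul_neg_of_neg_of_pos hrr h4]
  -- roots between nodes
  have hroot : ∀ k, k + 1 < N → ∃ c, x k < c ∧ c < x (k + 1) ∧ D.eval c = 0 := by
    intro k hk1
    have hxlt : x k < x (k + 1) := hmono k (k + 1) (by omega) hk1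
    have h := hDalt k hk1
    have h0 : (0:ℝ) ∈ Set.uIcc (D.eval (x k)) (D.eval (x (k + 1))) := by
      rcases mul_neg_iff.mp h with ⟨h1, h2⟩ | ⟨h1, h2⟩
      · exact Set.mem_uIcc.mpr (Or.inr ⟨h2.le, h1.le⟩)
      · exact Set.mem_uIcc.mpr (Or.inl ⟨h1.le, h2.le⟩)
    obtain ⟨c, hc1, hc2⟩ := intermediate_value_uIcc
      (Polynomial.continuous D).continuousOn h0
    rw [Set.uIcc_of_le hxlt.le] at hc1
    have hne1 : D.eval (x k) ≠ 0 := by intro h'; rw [h'] at h; simp at h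
    have hne2 : D.eval (x (k + 1)) ≠ 0 := by intro h'; rw [h'] at h; simp at h
    refine ⟨c, ?_, ?_, hc2⟩
    · rcases lt_or_eq_of_le hc1.1 with h' | h'
      · exact h'
      · exact absurd (h' ▸ hc2) hne1
    · rcases lt_or_eq_of_le hc1.2 with h' | h'
      · exact h'
      · exact absurd (h'.symm ▸ hc2) hne2
  -- choose roots
  set y : ℕ → ℝ := fun k => if h : k + 1 < N then (hroot k h).choose else 0 with hy
  have hyspec : ∀ k, k + 1 < N →
      x k < y k ∧ y k < x (k + 1) ∧ D.eval (y k) = 0 := by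
    intro k h
    simp only [hy, dif_pos h]
    exact (hroot k h).choose_spec
  -- D must be zero
  have hD0 : D = 0 := by
    by_contra hD0
    have hymono : ∀ a b, a < b → b < N - 1 → y a < y b := by
      intro a b h hb
      have ha1 : a + 1 < N := by omega
      have hb1 : b + 1 < N := by omega
      have h1 := hyspec a ha1
      have h2 := hyspec b hb1
      have hx : x (a + 1) ≤ x b := by
        rcases eq_or_lt_of_le (by omega : a + 1 ≤ b) with h' | h'
        · exact le_of_eq (congrArg x h')
        · exact (hmono (a + 1) b h' (by omega)).le
      exact lt_of_lt_of_le h1.2.1 (le_trans hx h2.1.le)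
    have hinj : Set.InjOn y (Finset.range (N - 1)) := by
      intro a ha b hb hab
      simp only [Finset.coe_range, Set.mem_Iio] at ha hb
      rcases lt_trichotomy a b with h | h | h
      · exact absurd hab (hymono a b h hb).ne
      · exact h
      · exact absurd hab.symm (hymono b a h ha).ne
    have hsub : (Finset.range (N - 1)).image y ⊆ D.roots.toFinset := by
      intro c hc
      simp only [Finset.mem_image, Finset.mem_range] at hc
      obtain ⟨k, hk, rfl⟩ := hc
      rw [Multiset.mem_toFinset, Polynomial.mem_roots hD0]
      exact (hyspec k (by omega)).2.2
    have hcard : N - 1 ≤ D.roots.toFinset.card := by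
      calc N - 1 = ((Finset.range (N - 1)).image y).card := by
            rw [Finset.card_image_of_injOn hinj, Finset.card_range]
          _ ≤ D.roots.toFinset.card := Finset.card_le_card hsub
    have := le_trans (le_trans hcard (Multiset.toFinset_card_le _)) (Polynomial.card_roots' D)
    omega
  -- contradiction at x 0
  have h0N : 0 < N := by omega
  have hD00 : D.eval (x 0) = 0 := by rw [hD0, Polynomial.eval_zero]
  have hs0 : Q.eval (x 0) * Qt.eval (x 0) ≠ 0 :=
    mul_ne_zero (hQne' _ (hmem 0 h0N)) (hQne _ (hmem 0 h0N))
  have hr0 : R (x 0) - Rt (x 0) = 0 := by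
    have h := hDeval 0 h0N
    rw [hD00] at h
    rcases mul_eq_zero.mp h.symm with h' | h'
    exacts [h', absurd h' hs0]
  have hfin := hsign 0 h0N
  rw [hr0, mul_zero] at hfin
  exact lt_irrefl 0 hfin
end

section
/- Existence of best rational approximants: Let [A,B] be a real segment with A < B, let f : [A,B] → ℝ be continuous, and let m, n be nonnegative integers. Then there exists a rational function R* of type (n,m) on [A,B] such that for every rational function R of type (n,m) on [A,B], sup_{x∈[A,B]} |f(x) − R*(x)| ≤ sup_{x∈[A,B]} |f(x) − R(x)|. -/
open Polynomial Set Filter Topology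

noncomputable def polynomialFunctionsDegreeLE (s : Set ℝ) (d : ℕ) : Submodule ℝ C(s, ℝ) :=
  (degreeLT ℝ (d + 1)).map (toContinuousMapOnAlgHom s).toLinearMap

instance (s : Set ℝ) (d : ℕ) : FiniteDimensional ℝ (polynomialFunctionsDegreeLE s d) :=
  Module.Finite.map _ _

theorem mem_polynomialFunctionsDegreeLE {s : Set ℝ} {d : ℕ} {g : C(s, ℝ)} :
    g ∈ polynomialFunctionsDegreeLE s d ↔
      ∃ P : ℝ[X], P.natDegree ≤ d ∧ ∀ x : s, P.eval (x : ℝ) = g x := by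
  simp only [polynomialFunctionsDegreeLE, Submodule.mem_map, degreeLT_succ_eq_degreeLE,
    mem_degreeLE, ← natDegree_le_iff_degree_le, ContinuousMap.ext_iff]
  rfl

theorem exists_abs_mul_sub_le_of_forall_pos {X : Type*} [TopologicalSpace X] [CompactSpace X]
    {V W : Submodule ℝ C(X, ℝ)} [FiniteDimensional ℝ V] [FiniteDimensional ℝ W]
    {f : C(X, ℝ)} {δ : ℝ}
    (h : ∀ ε > 0, ∃ p ∈ V, ∃ q ∈ W, ‖q‖ = 1 ∧ ∀ x, |f x * q x - p x| ≤ (δ + ε) * |q x|) :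
    ∃ p ∈ V, ∃ q ∈ W, ‖q‖ = 1 ∧ ∀ x, |f x * q x - p x| ≤ δ * |q x| := by
  choose p hp q hq hq1 hpq using fun k : ℕ => h (1 / (k + 1)) Nat.one_div_pos_of_nat
  set r := ‖f‖ + |δ| + 1
  have hr : 1 ≤ r := by simp only [r]; linarith [norm_nonneg f, abs_nonneg δ]
  have hp_le : ∀ k, ‖p k‖ ≤ r := fun k => by
    refine (ContinuousMap.norm_le _ (by positivity)).2 fun x => ?_
    have hqx : |q k x| ≤ 1 := hq1 k ▸ (q k).norm_coe_le_norm x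
    have hfx : |f x| ≤ ‖f‖ := f.norm_coe_le_norm x
    have hε : 1 / ((k : ℝ) + 1) ≤ 1 := div_le_one_of_le₀ (by simp) (by positivity)
    calc ‖p k x‖ = |f x * q k x - (f x * q k x - p k x)| := by
          rw [Real.norm_eq_abs, sub_sub_cancel]
      _ ≤ |f x| * |q k x| + (δ + 1 / (k + 1)) * |q k x| := by
          rw [← abs_mul]; exact (abs_sub _ _).trans (add_le_add le_rfl (hpq k x))
      _ ≤ ‖f‖ * 1 + (|δ| + 1) * 1 := by
          gcongr ?_ + ?_
          · exact mul_le_mul hfx hqx (abs_nonneg _) (norm_nonneg f)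
          · calc (δ + 1 / (k + 1)) * |q k x| ≤ (|δ| + 1) * |q k x| := by
                  gcongr; linarith [le_abs_self δ]
              _ ≤ (|δ| + 1) * 1 := by gcongr
      _ = r := by ring
  set u : ℕ → V × W := fun k => (⟨p k, hp k⟩, ⟨q k, hq k⟩)
  have hu : ∀ k, u k ∈ Metric.closedBall 0 r := fun k => by
    simp [u, Prod.norm_def, hq1, hp_le, hr]
  obtain ⟨⟨p₀, q₀⟩, -, φ, hφ, hlim⟩ := (isCompact_closedBall _ _).tendsto_subseq hu
  have hq_lim : Tendsto (fun j => q (φ j)) atTop (𝓝 q₀) :=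
    (continuous_subtype_val.comp continuous_snd).continuousAt.tendsto.comp hlim
  have hp_lim : Tendsto (fun j => p (φ j)) atTop (𝓝 p₀) :=
    (continuous_subtype_val.comp continuous_fst).continuousAt.tendsto.comp hlim
  refine ⟨p₀, p₀.2, q₀, q₀.2, ?_, fun x => ?_⟩
  · exact tendsto_nhds_unique (hq_lim.norm.congr fun j => hq1 (φ j)) tendsto_const_nhds
  · have hε : Tendsto (fun j => δ + 1 / ((φ j : ℝ) + 1)) atTop (𝓝 δ) := by
      simpa using (tendsto_const_nhds (x := δ)).add
        (tendsto_one_div_add_atTop_nhds_zero_nat.comp hφ.tendsto_atTop)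
    have hqx := ((continuous_eval_const x).tendsto _).comp hq_lim
    have hpx := ((continuous_eval_const x).tendsto _).comp hp_lim
    exact le_of_tendsto_of_tendsto' (((hqx.const_mul (f x)).sub hpx).abs)
      (hε.mul hqx.abs) fun j => hpq (φ j) x

variable {A B δ : ℝ} {f : ℝ → ℝ} {n m : ℕ}

theorem Icc_subset_closure_Icc_diff_singleton (hAB : A < B) (x₀ : ℝ) :
    Icc A B ⊆ closure (Icc A B \ {x₀}) := by
  have hdense := (dense_compl_singleton x₀).open_subset_closure_inter (isOpen_Ioo (a := A) (b := B))
  refine (closure_Ioo hAB.ne).symm.subset.trans <| closure_minimal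
    (hdense.trans (closure_mono fun y hy => ⟨Ioo_subset_Icc_self hy.1, hy.2⟩)) isClosed_closure

theorem abs_mul_sub_le_of_X_sub_C_mul (hAB : A < B) (hf : ContinuousOn f (Icc A B))
    {x₀ : ℝ} {P Q : ℝ[X]}
    (h : ∀ x ∈ Icc A B, |f x * ((X - C x₀) * Q).eval x - ((X - C x₀) * P).eval x| ≤
      δ * |((X - C x₀) * Q).eval x|) :
    ∀ x ∈ Icc A B, |f x * Q.eval x - P.eval x| ≤ δ * |Q.eval x| := by
  have hoff : ∀ x ∈ Icc A B \ {x₀}, |f x * Q.eval x - P.eval x| ≤ δ * |Q.eval x| := by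
    rintro x ⟨hx, hx₀⟩
    refine le_of_mul_le_mul_left ?_ (abs_pos.2 (sub_ne_zero.2 hx₀))
    have hx' := h x hx
    simp only [eval_mul, eval_sub, eval_X, eval_C] at hx'
    calc |x - x₀| * |f x * Q.eval x - P.eval x|
        = |f x * ((x - x₀) * Q.eval x) - (x - x₀) * P.eval x| := by rw [← abs_mul]; ring_nf
      _ ≤ δ * |(x - x₀) * Q.eval x| := hx'
      _ = |x - x₀| * (δ * |Q.eval x|) := by rw [abs_mul]; ring
  have hcont : ContinuousOn (fun x => |f x * Q.eval x - P.eval x|) (Icc A B) := by fun_prop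
  intro x hx
  exact le_on_closure hoff (hcont.mono (closure_minimal sdiff_subset isClosed_Icc))
    (by fun_prop) (Icc_subset_closure_Icc_diff_singleton hAB x₀ hx)

theorem exists_isRatFun_of_abs_mul_sub_le (hAB : A < B) (hf : ContinuousOn f (Icc A B))
    {P Q : ℝ[X]} (hP : P.natDegree ≤ n) (hQ : Q.natDegree ≤ m) (hQ₀ : Q ≠ 0)
    (h : ∀ x ∈ Icc A B, |f x * Q.eval x - P.eval x| ≤ δ * |Q.eval x|) :
    ∃ R, IsRatFun A B n m R ∧ ∀ x ∈ Icc A B, |f x - R x| ≤ δ := by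
  induction hd : Q.natDegree using Nat.strong_induction_on generalizing P Q with
  | _ d ih =>
  by_cases hroot : ∃ x₀ ∈ Icc A B, Q.IsRoot x₀
  · obtain ⟨x₀, hx₀, hQx₀⟩ := hroot
    have hPx₀ : P.IsRoot x₀ := by simpa [hQx₀.eq_zero] using h x₀ hx₀
    obtain ⟨Q₁, rfl⟩ := dvd_iff_isRoot.mpr hQx₀
    obtain ⟨P₁, rfl⟩ := dvd_iff_isRoot.mpr hPx₀
    have hQ₁ : Q₁ ≠ 0 := right_ne_zero_of_mul hQ₀
    have hdeg : ((X - C x₀) * Q₁).natDegree = Q₁.natDegree + 1 := by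
      rw [natDegree_mul (X_sub_C_ne_zero x₀) hQ₁, natDegree_X_sub_C, add_comm]
    have hP₁ : P₁.natDegree ≤ n := by
      rcases eq_or_ne P₁ 0 with rfl | hP₁
      · simp
      · exact (natDegree_le_of_dvd (dvd_mul_left _ _)
          (mul_ne_zero (X_sub_C_ne_zero x₀) hP₁)).trans hP
    exact ih _ (by omega) hP₁ (by omega) hQ₁ (abs_mul_sub_le_of_X_sub_C_mul hAB hf h) rfl
  · push Not at hroot
    refine ⟨fun x => P.eval x / Q.eval x, ⟨P, Q, hP, hQ, hroot, fun _ _ => rfl⟩, fun x hx => ?_⟩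
    have hQx := abs_pos.2 (hroot x hx)
    rw [← mul_le_mul_iff_of_pos_right hQx, ← abs_mul, sub_mul, div_mul_cancel₀ _ (hroot x hx)]
    exact h x hx

theorem exists_isRatFun_of_mem_polynomialFunctionsDegreeLE (hAB : A < B)
    (hf : ContinuousOn f (Icc A B)) {p q : C(Icc A B, ℝ)}
    (hp : p ∈ polynomialFunctionsDegreeLE (Icc A B) n)
    (hq : q ∈ polynomialFunctionsDegreeLE (Icc A B) m) (hq₀ : q ≠ 0)
    (h : ∀ x : Icc A B, |f x * q x - p x| ≤ δ * |q x|) :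
    ∃ R, IsRatFun A B n m R ∧ ∀ x ∈ Icc A B, |f x - R x| ≤ δ := by
  obtain ⟨P, hPn, hPp⟩ := mem_polynomialFunctionsDegreeLE.1 hp
  obtain ⟨Q, hQm, hQq⟩ := mem_polynomialFunctionsDegreeLE.1 hq
  have hQ₀ : Q ≠ 0 := by
    rintro rfl
    exact hq₀ (ContinuousMap.ext fun x => by simp [← hQq])
  refine exists_isRatFun_of_abs_mul_sub_le hAB hf hPn hQm hQ₀ fun x hx => ?_
  simpa only [← hPp, ← hQq] using h ⟨x, hx⟩

namespace IsRatFun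

variable {R : ℝ → ℝ}

theorem zero : IsRatFun A B n m 0 :=
  ⟨0, 1, by simp, by simp, fun _ _ => by simp, fun _ _ => by simp⟩

theorem continuousOn (hR : IsRatFun A B n m R) : ContinuousOn R (Icc A B) := by
  obtain ⟨P, Q, -, -, hQ₀, hRPQ⟩ := hR
  exact (P.continuousOn.div Q.continuousOn hQ₀).congr hRPQ

theorem abs_sub_le_iSup (hf : ContinuousOn f (Icc A B)) (hR : IsRatFun A B n m R)
    (x : Icc A B) : |f x - R x| ≤ ⨆ y : Icc A B, |f y - R y| :=
  le_ciSup (isCompact_range ((hf.sub hR.continuousOn).abs.domRestrict)).bddAbove x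

theorem exists_normalized (hAB : A ≤ B) (hR : IsRatFun A B n m R) :
    ∃ p ∈ polynomialFunctionsDegreeLE (Icc A B) n, ∃ q ∈ polynomialFunctionsDegreeLE (Icc A B) m,
      ‖q‖ = 1 ∧ ∀ x : Icc A B, p x = R x * q x := by
  obtain ⟨P, Q, hP, hQ, hQ₀, hRPQ⟩ := hR
  set q := Q.toContinuousMapOn (Icc A B)
  have hq : q ≠ 0 := fun h => hQ₀ A (left_mem_Icc.2 hAB)
    (by simpa [q] using congr($h ⟨A, left_mem_Icc.2 hAB⟩))
  refine ⟨‖q‖⁻¹ • P.toContinuousMapOn _,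
    Submodule.smul_mem _ _ (mem_polynomialFunctionsDegreeLE.2 ⟨P, hP, fun _ => rfl⟩),
    ‖q‖⁻¹ • q, Submodule.smul_mem _ _ (mem_polynomialFunctionsDegreeLE.2 ⟨Q, hQ, fun _ => rfl⟩),
    norm_smul_inv_norm hq, fun x => ?_⟩
  simp only [q, ContinuousMap.smul_apply, toContinuousMapOn_apply, toContinuousMap_apply,
    smul_eq_mul, hRPQ x x.2]
  field_simp [hQ₀ x x.2]

end IsRatFun

/-- Existence of best rational approximants of type (n,m). -/
theorem exists_best_rational_approximant
    (A B : ℝ) (hAB : A < B) (f : ℝ → ℝ) (hf : ContinuousOn f (Set.Icc A B))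
    (m n : ℕ) :
    ∃ Rstar : ℝ → ℝ, IsRatFun A B n m Rstar ∧
      ∀ R : ℝ → ℝ, IsRatFun A B n m R →
        (⨆ y : Set.Icc A B, |f y.1 - Rstar y.1|) ≤ ⨆ y : Set.Icc A B, |f y.1 - R y.1| := by
  have : Nonempty (Icc A B) := ⟨⟨A, left_mem_Icc.2 hAB.le⟩⟩
  have : Nonempty {R // IsRatFun A B n m R} := ⟨⟨0, .zero⟩⟩
  set err : {R // IsRatFun A B n m R} → ℝ := fun R => ⨆ y : Icc A B, |f y - R.1 y|
  have hbdd : BddBelow (range err) :=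
    ⟨0, forall_mem_range.2 fun _ => Real.iSup_nonneg fun _ => abs_nonneg _⟩
  set δ := ⨅ R, err R
  let F : C(Icc A B, ℝ) := ⟨(Icc A B).domRestrict f, hf.domRestrict⟩
  have happrox : ∀ ε > 0, ∃ p ∈ polynomialFunctionsDegreeLE (Icc A B) n,
      ∃ q ∈ polynomialFunctionsDegreeLE (Icc A B) m,
        ‖q‖ = 1 ∧ ∀ x, |F x * q x - p x| ≤ (δ + ε) * |q x| := by
    intro ε hε
    obtain ⟨⟨R, hR⟩, hRδ⟩ := exists_lt_of_ciInf_lt (lt_add_of_pos_right δ hε)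
    obtain ⟨p, hp, q, hq, hq1, hpq⟩ := hR.exists_normalized hAB.le
    refine ⟨p, hp, q, hq, hq1, fun x => ?_⟩
    rw [hpq, ← sub_mul, abs_mul]
    exact mul_le_mul_of_nonneg_right ((hR.abs_sub_le_iSup hf x).trans hRδ.le) (abs_nonneg _)
  obtain ⟨p, hp, q, hq, hq1, hpq⟩ := exists_abs_mul_sub_le_of_forall_pos happrox
  obtain ⟨R, hR, hRδ⟩ := exists_isRatFun_of_mem_polynomialFunctionsDegreeLE hAB hf hp hq
    (norm_ne_zero_iff.1 (hq1 ▸ one_ne_zero)) hpq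
  exact ⟨R, hR, fun R' hR' =>
    (ciSup_le fun y : Icc A B => hRδ y y.2).trans (ciInf_le hbdd ⟨R', hR'⟩)⟩
end

section
/- Cheney's theorem on sign changes: Let φ : [−1,1] → ℝ be a function such that φ·w is Lebesgue integrable on [−1,1], and let k be a nonnegative integer. Suppose ∫_{−1}^{1} φ(x) T_i(x) w(x) dx = 0 for every i = 0, 1, …, k. Then for every integer m with 0 ≤ m ≤ k and all points x₁ < x₂ < ⋯ < x_m in (−1,1), if φ(x)·∏_{i=1}^{m}(x − x_i) ≥ 0 for almost every x ∈ [−1,1], then φ vanishes almost everywhere on [−1,1]. (In other words, φ either vanishes almost everywhere or changes sign in [−1,1] at least k + 1 times.) -/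
open MeasureTheory Polynomial.Chebyshev Polynomial

noncomputable section

namespace CheneyAux

/-- The set of Chebyshev polynomials of index at most `n`. -/
def S (n : ℕ) : Set ℝ[X] := {p | ∃ i : ℕ, i ≤ n ∧ p = T ℝ (i : ℤ)}

lemma S_mono {n m : ℕ} (h : n ≤ m) : S n ⊆ S m := by
  rintro p ⟨i, hi, rfl⟩; exact ⟨i, hi.trans h, rfl⟩

lemma X_mul_T_mem (n : ℕ) (i : ℕ) (hi : i ≤ n) :
    (X : ℝ[X]) * T ℝ (i : ℤ) ∈ Submodule.span ℝ (S (n + 1)) := by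
  rcases i with _ | j
  · -- X * T 0 = X = T 1
    have h0 : (X : ℝ[X]) * T ℝ ((0 : ℕ) : ℤ) = T ℝ ((1 : ℕ) : ℤ) := by
      norm_num [Polynomial.Chebyshev.T_zero, Polynomial.Chebyshev.T_one]
    rw [h0]
    exact Submodule.subset_span ⟨1, by omega, rfl⟩
  · -- X * T (j+1) = (1/2) (T (j+2) + T j)
    have key : (X : ℝ[X]) * T ℝ ((j : ℤ) + 1)
        = (2⁻¹ : ℝ) • (T ℝ ((j : ℤ) + 2) + T ℝ (j : ℤ)) := by
      have h := smul_right_injective ℝ[X] (two_ne_zero (α := ℝ))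
      apply h
      show (2:ℝ) • ((X : ℝ[X]) * T ℝ ((j:ℤ)+1))
          = (2:ℝ) • ((2⁻¹:ℝ) • (T ℝ ((j:ℤ)+2) + T ℝ (j:ℤ)))
      rw [smul_smul]
      norm_num [two_smul]
      ring
    have hc1 : ((j + 1 : ℕ) : ℤ) = (j : ℤ) + 1 := by push_cast; ring
    rw [hc1, key]
    apply Submodule.smul_mem
    apply Submodule.add_mem
    · exact Submodule.subset_span ⟨j + 2, by omega, by push_cast; ring_nf⟩
    · exact Submodule.subset_span ⟨j, by omega, rfl⟩

lemma pow_mem_span (n : ℕ) : (X : ℝ[X]) ^ n ∈ Submodule.span ℝ (S n) := by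
  induction n with
  | zero =>
    have h0 : (X : ℝ[X]) ^ 0 = T ℝ ((0 : ℕ) : ℤ) := by
      norm_num [Polynomial.Chebyshev.T_zero]
    rw [h0]; exact Submodule.subset_span ⟨0, le_refl _, rfl⟩
  | succ n ih =>
    have h1 : (X : ℝ[X]) ^ (n + 1) = (LinearMap.mulLeft ℝ (X : ℝ[X])) ((X : ℝ[X]) ^ n) := by
      simp [LinearMap.mulLeft_apply, pow_succ, mul_comm]
    rw [h1]
    have h2 : (LinearMap.mulLeft ℝ (X : ℝ[X])) ((X : ℝ[X]) ^ n)
        ∈ Submodule.map (LinearMap.mulLeft ℝ (X : ℝ[X])) (Submodule.span ℝ (S n)) :=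
      Submodule.mem_map_of_mem ih
    rw [Submodule.map_span] at h2
    refine Submodule.span_le.mpr ?_ h2
    rintro q ⟨p, ⟨i, hi, rfl⟩, rfl⟩
    exact X_mul_T_mem n i hi

lemma mem_span_of_natDegree_le (p : ℝ[X]) (k : ℕ) (h : p.natDegree ≤ k) :
    p ∈ Submodule.span ℝ (S k) := by
  have hrep : p = ∑ i ∈ Finset.range (k + 1), p.coeff i • (X : ℝ[X]) ^ i := by
    conv_lhs => rw [Polynomial.as_sum_range' p (k + 1) (by omega)]
    simp [Polynomial.smul_eq_C_mul, Polynomial.C_mul_X_pow_eq_monomial]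
  rw [hrep]
  apply Submodule.sum_mem
  intro i hi
  apply Submodule.smul_mem
  exact Submodule.span_mono (S_mono (by simp at hi; omega)) (pow_mem_span i)

end CheneyAux

end

open CheneyAux

/-- Cheney's theorem on sign changes: a function with weight 1/√(1-x²) that is
orthogonal to the Chebyshev polynomials T_0, …, T_k either changes sign at least
k+1 times in [-1,1] or vanishes almost everywhere. -/
theorem cheney_sign_changes
    (φ : ℝ → ℝ)
    (hint : IntegrableOn (fun x => φ x * (1 / Real.sqrt (1 - x ^ 2))) (Set.Icc (-1 : ℝ) 1))
    (k : ℕ)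
    (horth : ∀ i : ℕ, i ≤ k →
      ∫ x in Set.Icc (-1 : ℝ) 1,
        φ x * (T ℝ i).eval x * (1 / Real.sqrt (1 - x ^ 2)) = 0) :
    ∀ m : ℕ, m ≤ k → ∀ x : Fin m → ℝ, StrictMono x →
      (∀ i, x i ∈ Set.Ioo (-1 : ℝ) 1) →
      (∀ᵐ t ∂(volume.restrict (Set.Icc (-1 : ℝ) 1)), 0 ≤ φ t * ∏ i, (t - x i)) →
      ∀ᵐ t ∂(volume.restrict (Set.Icc (-1 : ℝ) 1)), φ t = 0 := by
  intro m hm x hxmono hxmem hpos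
  set μ := volume.restrict (Set.Icc (-1 : ℝ) 1) with hμ
  -- integrability of p.eval * (φ * w) for any polynomial p
  have intPoly : ∀ p : ℝ[X],
      Integrable (fun t => p.eval t * (φ t * (1 / Real.sqrt (1 - t ^ 2)))) μ := by
    intro p
    obtain ⟨C, hC⟩ := (isCompact_Icc (a := (-1:ℝ)) (b := 1)).exists_bound_of_continuousOn
      (Polynomial.continuous p).continuousOn
    refine Integrable.bdd_mul (c := C) hint ?_ ?_
    · exact (Polynomial.continuous p).aestronglyMeasurable
    · exact (ae_restrict_mem measurableSet_Icc).mono fun t ht => hC t ht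
  -- the integral functional vanishes on the span of T_0, …, T_k
  have Jzero : ∀ p : ℝ[X], p ∈ Submodule.span ℝ (S k) →
      ∫ t, p.eval t * (φ t * (1 / Real.sqrt (1 - t ^ 2))) ∂μ = 0 := by
    intro p hspan
    induction hspan using Submodule.span_induction with
    | mem q hq =>
      obtain ⟨i, hik, rfl⟩ := hq
      rw [← horth i hik]
      apply integral_congr_ae
      filter_upwards with t
      ring
    | zero => simp
    | add q r _ _ hq hr =>
      have heq : (fun t => (q + r).eval t * (φ t * (1 / Real.sqrt (1 - t ^ 2))))
          = (fun t => q.eval t * (φ t * (1 / Real.sqrt (1 - t ^ 2))))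
            + (fun t => r.eval t * (φ t * (1 / Real.sqrt (1 - t ^ 2)))) := by
        funext t; simp [Polynomial.eval_add]; ring
      rw [heq, integral_add' (intPoly q) (intPoly r), hq, hr, add_zero]
    | smul c q _ hq =>
      have heq : (fun t => (c • q).eval t * (φ t * (1 / Real.sqrt (1 - t ^ 2))))
          = fun t => c • (q.eval t * (φ t * (1 / Real.sqrt (1 - t ^ 2)))) := by
        funext t; simp [Polynomial.eval_smul]; ring
      rw [heq, integral_smul, hq, smul_zero]
  -- the sign-change polynomial
  set p : ℝ[X] := ∏ i, (X - Polynomial.C (x i)) with hp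
  have hpev : ∀ t, p.eval t = ∏ i, (t - x i) := by
    intro t; simp [hp, Polynomial.eval_prod]
  have hpdeg : p.natDegree ≤ k := by
    have h1 : p.natDegree ≤ m := by
      refine le_trans (Polynomial.natDegree_prod_le _ _) ?_
      have hbnd : ∀ i ∈ Finset.univ, ((X : ℝ[X]) - Polynomial.C (x i)).natDegree ≤ 1 :=
        fun i _ => Polynomial.natDegree_X_sub_C_le _
      exact le_trans (Finset.sum_le_sum hbnd) (by simp)
    omega
  -- the nonnegative function with zero integral
  set f : ℝ → ℝ := fun t => p.eval t * (φ t * (1 / Real.sqrt (1 - t ^ 2))) with hf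
  have hf_nonneg : 0 ≤ᶠ[ae μ] f := by
    filter_upwards [hpos] with t ht
    have hw : 0 ≤ 1 / Real.sqrt (1 - t ^ 2) := by positivity
    have heq : f t = (φ t * ∏ i, (t - x i)) * (1 / Real.sqrt (1 - t ^ 2)) := by
      simp only [hf, hpev]; ring
    rw [heq]
    exact mul_nonneg ht hw
  have hf_zero : f =ᶠ[ae μ] 0 :=
    (integral_eq_zero_iff_of_nonneg_ae hf_nonneg (intPoly p)).mp
      (Jzero p (mem_span_of_natDegree_le p k hpdeg))
  -- bad set of measure zero
  have hbad : ∀ᵐ t ∂μ, t ∉ ({-1, 1} ∪ Set.range x : Set ℝ) := by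
    apply ae_restrict_of_ae
    have hfin : ({-1, 1} ∪ Set.range x : Set ℝ).Finite :=
      (Set.toFinite _).union (Set.finite_range x)
    exact measure_eq_zero_iff_ae_notMem.mp (hfin.measure_zero volume)
  filter_upwards [hf_zero, hbad, ae_restrict_mem measurableSet_Icc] with t hft hbt htI
  simp only [Set.mem_union, Set.mem_insert_iff, Set.mem_singleton_iff, Set.mem_range,
    not_or, not_exists] at hbt
  obtain ⟨⟨hne1, hne2⟩, hnex⟩ := hbt
  have ht1 : -1 < t := lt_of_le_of_ne htI.1 (Ne.symm hne1)
  have ht2 : t < 1 := lt_of_le_of_ne htI.2 hne2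
  have hwpos : 0 < 1 / Real.sqrt (1 - t ^ 2) := by
    have h1 : 0 < 1 - t ^ 2 := by nlinarith
    positivity
  have hpne : p.eval t ≠ 0 := by
    rw [hpev]
    exact Finset.prod_ne_zero_iff.mpr fun i _ => sub_ne_zero.mpr fun h => hnex i h.symm
  have hft' := hft
  simp only [hf, Pi.zero_apply] at hft'
  rcases mul_eq_zero.mp hft' with h | h
  · exact absurd h hpne
  · rcases mul_eq_zero.mp h with h' | h'
    · exact h'
    · exact absurd h' hwpos.ne'
end

section
/- Chebyshev minimality of the monic Chebyshev polynomial: Let n ≥ 1 be an integer. For every real polynomial S with deg S ≤ n − 1, sup_{x∈[−1,1]} |x^n − S(x)| ≥ 2^{1−n}, and equality holds for S(x) = x^n − 2^{1−n} T_n(x). Thus x^n − 2^{1−n}T_n(x) is a best approximant of degree n − 1 to x^n on [−1,1] in the uniform norm. -/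
/-!
By Lagrange interpolation at the Chebyshev nodes (`coeff_le_of_forall_abs_le_one`), a real
polynomial of degree at most `n` bounded by `1` on `[-1, 1]` has `n`-th coefficient at most
`2 ^ (n - 1)`. Rescaled to a bound `M` and applied to the monic polynomial `x ^ n - S`, this gives
`1 ≤ 2 ^ (n - 1) * M`. The bound is attained by `x ^ n - S = 2 ^ (1 - n) * T_n`, since
`|T_n| ≤ 1` on `[-1, 1]` and `T_n 1 = 1`.
-/

open Polynomial Polynomial.Chebyshev

theorem Polynomial.Chebyshev.coeff_le_mul_of_forall_abs_le {n : ℕ} {P : ℝ[X]} {M : ℝ}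
    (hPdeg : P.degree ≤ n) (hPbnd : ∀ x ∈ Set.Icc (-1) 1, |P.eval x| ≤ M) :
    P.coeff n ≤ 2 ^ (n - 1) * M := by
  -- Rescaling by `M` itself would fail when `M = 0`, so rescale by `M' > M`.
  refine le_of_forall_pos_le_add fun ε hε => ?_
  set M' := M + ε / 2 ^ (n - 1)
  have hM' : 0 < M' :=
    add_pos_of_nonneg_of_pos ((abs_nonneg _).trans (hPbnd 0 (by norm_num))) (by positivity)
  have hscaled : (Polynomial.C M'⁻¹ * P).coeff n ≤ 2 ^ (n - 1) := by
    refine coeff_le_of_forall_abs_le_one ((degree_C_mul (inv_ne_zero hM'.ne')).trans_le hPdeg)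
      fun x hx => ?_
    rw [eval_mul, eval_C, abs_mul, abs_inv, abs_of_pos hM', inv_mul_le_one₀ hM']
    linarith [hPbnd x hx, div_pos hε (by positivity : (0 : ℝ) < 2 ^ (n - 1))]
  rw [coeff_C_mul, inv_mul_le_iff₀ hM'] at hscaled
  calc P.coeff n ≤ M' * 2 ^ (n - 1) := hscaled
    _ = 2 ^ (n - 1) * M + ε := by rw [add_mul, div_mul_cancel₀ _ (by positivity), mul_comm]

theorem Polynomial.Chebyshev.iSup_abs_eval_T_real_Icc (n : ℤ) :
    ⨆ x : Set.Icc (-1 : ℝ) 1, |(T ℝ n).eval x.1| = 1 := by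
  have : Nonempty (Set.Icc (-1 : ℝ) 1) := ⟨⟨1, by norm_num, le_rfl⟩⟩
  refine le_antisymm (ciSup_le fun x => abs_eval_T_real_le_one n (abs_le.mpr x.2)) ?_
  refine le_ciSup_of_le ⟨1, ?_⟩ ⟨1, by norm_num, le_rfl⟩ (by simp [T_eval_one])
  rintro _ ⟨x, rfl⟩
  exact abs_eval_T_real_le_one n (abs_le.mpr x.2)

theorem zpow_one_sub_natCast_mul_pow_sub_one {G : Type*} [GroupWithZero G] {a : G} (ha : a ≠ 0)
    {n : ℕ} (hn : 1 ≤ n) : a ^ ((1 : ℤ) - n) * a ^ (n - 1) = 1 := by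
  rw [← zpow_natCast, ← zpow_add₀ ha, Nat.cast_sub hn]
  simp

/-- Chebyshev minimality of the monic Chebyshev polynomial: every polynomial S of
degree < n deviates from x^n by at least 2^{1-n} on [-1,1], and
S = x^n − 2^{1-n}·T_n achieves this bound. -/
theorem monic_chebyshev_minimality (n : ℕ) (hn : 1 ≤ n) :
    (∀ S : Polynomial ℝ, S.degree < n →
      (2 : ℝ) ^ ((1 : ℤ) - n) ≤ ⨆ x : Set.Icc (-1 : ℝ) 1, |x.1 ^ n - S.eval x.1|) ∧
    (⨆ x : Set.Icc (-1 : ℝ) 1,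
        |x.1 ^ n - (X ^ n - C ((2 : ℝ) ^ ((1 : ℤ) - n)) * T ℝ n).eval x.1|
      = (2 : ℝ) ^ ((1 : ℤ) - n)) := by
  set c : ℝ := 2 ^ ((1 : ℤ) - n)
  have hc : 0 < c := by positivity
  constructor
  · intro S hS
    set M := ⨆ x : Set.Icc (-1 : ℝ) 1, |x.1 ^ n - S.eval x.1|
    have hbdd : BddAbove (Set.range fun x : Set.Icc (-1 : ℝ) 1 => |x.1 ^ n - S.eval x.1|) :=
      (isCompact_range (by fun_prop)).bddAbove
    have hdeg : (X ^ n - S).degree ≤ (n : WithBot ℕ) :=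
      (degree_sub_le _ _).trans (max_le (degree_X_pow_le n) hS.le)
    have hcoeff : (X ^ n - S).coeff n = 1 := by simp [coeff_eq_zero_of_degree_lt hS]
    have hbound : (X ^ n - S).coeff n ≤ 2 ^ (n - 1) * M :=
      coeff_le_mul_of_forall_abs_le hdeg fun x hx => by
        simpa only [eval_sub, eval_pow, eval_X] using le_ciSup hbdd ⟨x, hx⟩
    calc c = c * (X ^ n - S).coeff n := by rw [hcoeff, mul_one]
      _ ≤ c * (2 ^ (n - 1) * M) := by gcongr
      _ = M := by rw [← mul_assoc, zpow_one_sub_natCast_mul_pow_sub_one two_ne_zero hn, one_mul]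
  · have heval (x : ℝ) : x ^ n - (X ^ n - C c * T ℝ n).eval x = c * (T ℝ n).eval x := by simp
    simp_rw [heval, abs_mul, ← Real.mul_iSup_of_nonneg (abs_nonneg c), iSup_abs_eval_T_real_Icc,
      abs_of_pos hc, mul_one]
end

section
/- Error approximant property for linear Padé–Chebyshev approximation: Let f : [−1,1] → ℝ be a function such that f·w is Lebesgue integrable on [−1,1], and define c_k = (2/π)∫_{−1}^{1} f(x)T_k(x)w(x)dx for every integer k ≥ 0. Let m, n be nonnegative integers and Δb₀, …, Δb_m real numbers. Define the polynomials ΔQ = (1/2)Δb₀T₀ + Σ_{j=1}^{m} Δb_j T_j and ΔP = (1/2)Δa₀T₀ + Σ_{i=1}^{n} Δa_i T_i, where for each i = 0, …, n, Δa_i = (1/2)·[Δb₀·c_i + Σ_{j=1}^{m} Δb_j·(c_{i+j} + c_{|i−j|})]. Then ∫_{−1}^{1} ( f(x)·ΔQ(x) − ΔP(x) ) T_i(x) w(x) dx = 0 for every i = 0, 1, …, n. -/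
/-!
Work with the Chebyshev measure `dμ = w dx` (`Polynomial.Chebyshev.measureT`) and the moments
`M_k(g) = ∫ g T_k dμ`, so that `c_k = (2/π) M_k(f)`. The product formula
`2 T_i T_j = T_{i+j} + T_{|i-j|}` gives, for any `g` integrable against `μ`,
`∫ g (a₀/2 + ∑_{j=1}^m a_j T_j) T_i dμ = ½ (a₀ M_i + ∑_{j=1}^m a_j (M_{i+j} + M_{|i-j|}))`.
For `g = f` and the coefficients `Δb` the right-hand side is `(π/2) Δa_i` by the definition of
`Δa`. For `g = 1` we have `M_k(1) = π δ_{k0}`, so the right-hand side collapses to `(π/2) a_i`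
whenever `i ≤ m`; with the coefficients `Δa` this is again `(π/2) Δa_i`, and the two integrals
cancel.
-/

open MeasureTheory Polynomial Polynomial.Chebyshev Real Set

theorem integral_measureT_eq_setIntegral (g : ℝ → ℝ) :
    ∫ x, g x ∂measureT = ∫ x in Icc (-1 : ℝ) 1, g x * (1 / √(1 - x ^ 2)) := by
  rw [integral_measureT, intervalIntegral.integral_of_le (by norm_num),
    integral_Icc_eq_integral_Ioc]
  simp only [one_div, Real.sqrt_inv]

theorem integrable_measureT_iff {g : ℝ → ℝ} :
    Integrable g measureT ↔ IntegrableOn (fun x => g x * (1 / √(1 - x ^ 2))) (Icc (-1) 1) := by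
  rw [integrableOn_Icc_iff_integrableOn_Ioc, measureT, restrict_withDensity measurableSet_Ioc,
    integrable_withDensity_iff_integrable_smul (by fun_prop)]
  simp [IntegrableOn, NNReal.smul_def, mul_comm]

theorem MeasureTheory.Integrable.mul_eval_measureT {g : ℝ → ℝ} (hg : Integrable g measureT)
    (p : ℝ[X]) :
    Integrable (fun x => g x * p.eval x) measureT := by
  rw [integrable_measureT_iff] at hg ⊢
  refine (hg.mul_continuousOn p.continuous.continuousOn isCompact_Icc).congr_fun
    (fun x _ => by ring) measurableSet_Icc

noncomputable def chebyshevMoment (g : ℝ → ℝ) (k : ℕ) : ℝ :=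
  ∫ x, g x * (T ℝ k).eval x ∂measureT

theorem chebyshevMoment_one (k : ℕ) :
    chebyshevMoment (fun _ => 1) k = if k = 0 then π else 0 := by
  simp only [chebyshevMoment, one_mul]
  split_ifs with hk
  · subst hk; exact integral_eval_T_real_measureT_zero
  · exact integral_eval_T_real_measureT_of_ne_zero (by exact_mod_cast hk)

noncomputable def chebyshevSum (a : ℕ → ℝ) (m : ℕ) : ℝ[X] :=
  C (1 / 2 * a 0) * T ℝ 0 + ∑ j ∈ Finset.Icc 1 m, C (a j) * T ℝ j

theorem eval_chebyshevSum (a : ℕ → ℝ) (m : ℕ) (x : ℝ) :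
    (chebyshevSum a m).eval x =
      1 / 2 * a 0 * (T ℝ 0).eval x + ∑ j ∈ Finset.Icc 1 m, a j * (T ℝ j).eval x := by
  simp [chebyshevSum, eval_finsetSum]

theorem two_mul_eval_T_mul_eval_T (i j : ℕ) (x : ℝ) :
    2 * ((T ℝ i).eval x * (T ℝ j).eval x) =
      (T ℝ (i + j : ℕ)).eval x + (T ℝ ((i : ℤ) - j).natAbs).eval x := by
  have h := congrArg (eval x) (T_mul_T (R := ℝ) i j)
  simp only [eval_mul, eval_ofNat, eval_add] at h
  rw [T_natAbs]; push_cast; linarith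

theorem two_mul_eval_chebyshevSum_mul_eval_T (a : ℕ → ℝ) (m i : ℕ) (x : ℝ) :
    2 * ((chebyshevSum a m).eval x * (T ℝ i).eval x) =
      a 0 * (T ℝ i).eval x + ∑ j ∈ Finset.Icc 1 m,
        a j * ((T ℝ (i + j : ℕ)).eval x + (T ℝ ((i : ℤ) - j).natAbs).eval x) := by
  rw [eval_chebyshevSum, add_mul, mul_add, Finset.sum_mul, Finset.mul_sum]
  congr 1
  · simp only [T_zero, eval_one]; ring
  · refine Finset.sum_congr rfl fun j _ => ?_
    rw [← two_mul_eval_T_mul_eval_T]; ring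

theorem integral_mul_eval_chebyshevSum_mul_eval_T {g : ℝ → ℝ} (hg : Integrable g measureT)
    (a : ℕ → ℝ) (m i : ℕ) :
    ∫ x, g x * (chebyshevSum a m).eval x * (T ℝ i).eval x ∂measureT =
      1 / 2 * (a 0 * chebyshevMoment g i + ∑ j ∈ Finset.Icc 1 m,
        a j * (chebyshevMoment g (i + j) + chebyshevMoment g ((i : ℤ) - j).natAbs)) := by
  have hgT (k : ℕ) : Integrable (fun x => g x * (T ℝ k).eval x) measureT :=
    hg.mul_eval_measureT _
  have hexpand (x : ℝ) : g x * (chebyshevSum a m).eval x * (T ℝ i).eval x =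
      1 / 2 * (a 0 * (g x * (T ℝ i).eval x) + ∑ j ∈ Finset.Icc 1 m,
        a j * (g x * (T ℝ (i + j : ℕ)).eval x + g x * (T ℝ ((i : ℤ) - j).natAbs).eval x)) := by
    rw [show g x * (chebyshevSum a m).eval x * (T ℝ i).eval x =
        1 / 2 * (g x * (2 * ((chebyshevSum a m).eval x * (T ℝ i).eval x))) by ring,
      two_mul_eval_chebyshevSum_mul_eval_T, mul_add, Finset.mul_sum]
    congr 2
    · ring
    · exact Finset.sum_congr rfl fun j _ => by ring
  have hterm (j : ℕ) : Integrable (fun x =>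
      a j * (g x * (T ℝ (i + j : ℕ)).eval x + g x * (T ℝ ((i : ℤ) - j).natAbs).eval x))
      measureT :=
    ((hgT _).add (hgT _)).const_mul _
  simp_rw [hexpand]
  rw [integral_const_mul, integral_add ((hgT i).const_mul _)
      (integrable_finsetSum _ fun j _ => hterm j), integral_const_mul,
    integral_finsetSum _ fun j _ => hterm j]
  simp only [integral_const_mul, integral_add (hgT _) (hgT _), chebyshevMoment]

theorem integral_eval_chebyshevSum_mul_eval_T (a : ℕ → ℝ) {n i : ℕ} (hi : i ≤ n) :
    ∫ x, (chebyshevSum a n).eval x * (T ℝ i).eval x ∂measureT = π / 2 * a i := by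
  have h := integral_mul_eval_chebyshevSum_mul_eval_T
    (integrable_measureT (continuousOn_const (c := (1 : ℝ)))) a n i
  simp only [one_mul, chebyshevMoment_one] at h
  have hterm : ∀ j ∈ Finset.Icc 1 n, a j * ((if i + j = 0 then π else 0) +
      if ((i : ℤ) - j).natAbs = 0 then π else 0) = if i = j then π * a j else 0 := by
    intro j hj
    have hj1 := (Finset.mem_Icc.1 hj).1
    rw [if_neg (by omega), zero_add]
    by_cases hij : i = j
    · rw [if_pos (by omega), if_pos hij, mul_comm]
    · rw [if_neg (by omega), if_neg hij, mul_zero]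
  rw [h, Finset.sum_congr rfl hterm, Finset.sum_ite_eq]
  rcases Nat.eq_zero_or_pos i with rfl | hpos
  · rw [if_pos rfl, if_neg (by simp)]; ring
  · rw [if_neg hpos.ne', if_pos (Finset.mem_Icc.2 ⟨hpos, hi⟩)]; ring

/-- Error approximant property for linear Padé–Chebyshev approximation:
the error approximant coefficients satisfy the orthogonality relations
∫ (f·ΔQ − ΔP)·T_i·w = 0 for i = 0, …, n. -/
theorem pade_chebyshev_error_approximant
    (f : ℝ → ℝ)
    (hf : IntegrableOn (fun x => f x * (1 / Real.sqrt (1 - x ^ 2))) (Set.Icc (-1 : ℝ) 1))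
    (c : ℕ → ℝ)
    (hc : ∀ k : ℕ, c k = (2 / Real.pi) *
      ∫ x in Set.Icc (-1 : ℝ) 1, f x * (T ℝ k).eval x * (1 / Real.sqrt (1 - x ^ 2)))
    (m n : ℕ) (Δb : ℕ → ℝ) (Δa : ℕ → ℝ)
    (hΔa : ∀ i ≤ n, Δa i = (1 / 2) * (Δb 0 * c i +
      ∑ j ∈ Finset.Icc 1 m, Δb j * (c (i + j) + c ((i : ℤ) - (j : ℤ)).natAbs)))
    (ΔQ ΔP : ℝ → ℝ)
    (hΔQ : ∀ x, ΔQ x = (1 / 2) * Δb 0 * (T ℝ 0).eval x +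
      ∑ j ∈ Finset.Icc 1 m, Δb j * (T ℝ j).eval x)
    (hΔP : ∀ x, ΔP x = (1 / 2) * Δa 0 * (T ℝ 0).eval x +
      ∑ i ∈ Finset.Icc 1 n, Δa i * (T ℝ i).eval x) :
    ∀ i ≤ n,
      ∫ x in Set.Icc (-1 : ℝ) 1,
        (f x * ΔQ x - ΔP x) * (T ℝ i).eval x * (1 / Real.sqrt (1 - x ^ 2)) = 0 := by
  intro i hi
  have hfT : Integrable f measureT := integrable_measureT_iff.2 hf
  have hmoment (k : ℕ) : chebyshevMoment f k = π / 2 * c k := by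
    rw [hc, chebyshevMoment, integral_measureT_eq_setIntegral]
    field_simp
  have hfQ :
      ∫ x, f x * (chebyshevSum Δb m).eval x * (T ℝ i).eval x ∂measureT = π / 2 * Δa i := by
    simp only [integral_mul_eval_chebyshevSum_mul_eval_T hfT, hmoment, hΔa i hi, ← mul_add,
      mul_left_comm (Δb _) (π / 2), ← Finset.mul_sum]
    ring
  simp_rw [← integral_measureT_eq_setIntegral, hΔQ, hΔP, ← eval_chebyshevSum, sub_mul]
  rw [integral_sub, hfQ, integral_eval_chebyshevSum_mul_eval_T Δa hi, sub_self]
  · simpa only [eval_mul, mul_assoc] using hfT.mul_eval_measureT (chebyshevSum Δb m * T ℝ i)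
  · exact integrable_measureT (by fun_prop)
end

section
/- Sign changes of the remainder of the Fourier–Chebyshev partial sum: Let f : [−1,1] → ℝ be continuous and let n be a nonnegative integer. Define c₀ = (1/π)∫_{−1}^{1} f(x)w(x)dx and c_i = (2/π)∫_{−1}^{1} f(x)T_i(x)w(x)dx for i = 1, …, n, and put P_n = Σ_{i=0}^{n} c_i T_i. Then either f(x) = P_n(x) for all x ∈ [−1,1], or there exist n + 2 points −1 ≤ x₀ < x₁ < ⋯ < x_{n+1} ≤ 1 such that (f − P_n)(x_j)·(f − P_n)(x_{j+1}) < 0 for every j = 0, 1, …, n; that is, f − P_n changes sign at least n + 1 times on [−1,1]. -/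
/-!
Put `r = f - P`. The coefficients `c i` are the Fourier coefficients of `f` in the orthogonal
system `T₀, …, Tₙ` for the Chebyshev measure, so `r` is orthogonal to `T₀, …, Tₙ` and hence to every
polynomial of degree `≤ n`. If `r` had at most `n` sign changes, a nonzero polynomial `q` of degree
`≤ n` with a simple root between any two consecutive sign changes would satisfy `r * q ≥ 0`; then
`∫ r q = 0` forces `r q = 0`, hence `r = 0`, on `[-1, 1]`.
-/

open MeasureTheory Polynomial Polynomial.Chebyshev

theorem integral_measureT_eq_setIntegral_Icc (g : ℝ → ℝ) :
    ∫ x, g x ∂measureT = ∫ x in Set.Icc (-1 : ℝ) 1, g x * (1 / Real.sqrt (1 - x ^ 2)) := by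
  rw [integral_measureT, intervalIntegral.integral_of_le (by norm_num),
    integral_Icc_eq_integral_Ioc]
  simp only [one_div, Real.sqrt_inv]

theorem integral_sub_sum_mul_eq_zero {α : Type*} [MeasurableSpace α] {μ : Measure α}
    {f : α → ℝ} {φ : ℕ → α → ℝ} {c : ℕ → ℝ} {n i : ℕ} (hi : i ≤ n)
    (horth : ∀ j ≠ i, ∫ x, φ j x * φ i x ∂μ = 0)
    (hc : c i * ∫ x, φ i x * φ i x ∂μ = ∫ x, f x * φ i x ∂μ)
    (hfφ : Integrable (fun x => f x * φ i x) μ)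
    (hφφ : ∀ j, Integrable (fun x => φ j x * φ i x) μ) :
    ∫ x, (f x - ∑ j ∈ Finset.range (n + 1), c j * φ j x) * φ i x ∂μ = 0 := by
  simp_rw [sub_mul, Finset.sum_mul, mul_assoc]
  rw [integral_sub hfφ (integrable_finsetSum _ fun j _ => (hφφ j).const_mul _),
    integral_finsetSum _ fun j _ => (hφφ j).const_mul _]
  simp_rw [integral_const_mul]
  rw [Finset.sum_eq_single_of_mem i (Finset.mem_range.2 (by omega))
    fun j _ hj => by rw [horth j hj, mul_zero], hc, sub_self]

theorem integral_sub_partialSum_mul_T_eq_zero {f : ℝ → ℝ}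
    (hf : ContinuousOn f (Set.Icc (-1 : ℝ) 1)) {n : ℕ} {c : ℕ → ℝ}
    (hc0 : c 0 = (1 / Real.pi) *
      ∫ x in Set.Icc (-1 : ℝ) 1, f x * (1 / Real.sqrt (1 - x ^ 2)))
    (hci : ∀ i : ℕ, 1 ≤ i → i ≤ n → c i = (2 / Real.pi) *
      ∫ x in Set.Icc (-1 : ℝ) 1, f x * (T ℝ i).eval x * (1 / Real.sqrt (1 - x ^ 2)))
    {P : ℝ → ℝ} (hP : ∀ x, P x = ∑ i ∈ Finset.range (n + 1), c i * (T ℝ i).eval x)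
    {i : ℕ} (hi : i ≤ n) :
    ∫ x, (f x - P x) * (T ℝ i).eval x ∂measureT = 0 := by
  simp_rw [hP]
  refine integral_sub_sum_mul_eq_zero (φ := fun j x => (T ℝ j).eval x) hi
    (fun j hj => integral_eval_T_real_mul_eval_T_real_measureT_of_ne hj) ?_
    (integrable_measureT (hf.mul (by fun_prop))) fun j => integrable_measureT (by fun_prop)
  rcases Nat.eq_zero_or_pos i with rfl | hi0
  · rw [Nat.cast_zero, integral_eval_T_real_mul_self_measureT_zero, hc0,
      integral_measureT_eq_setIntegral_Icc]
    simp only [T_zero, eval_one, mul_one]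
    field_simp
  · rw [integral_T_real_mul_self_measureT_of_ne_zero hi0.ne', hci i hi0 hi,
      integral_measureT_eq_setIntegral_Icc]
    field_simp

noncomputable def chebyshevTSequence : Polynomial.Sequence ℝ where
  elems' i := T ℝ i
  degree_eq' i := by simp

theorem span_T_eq_degreeLE (n : ℕ) :
    Submodule.span ℝ ((fun i : ℕ => T ℝ i) '' Set.Iic n) = degreeLE ℝ n :=
  chebyshevTSequence.span_degreeLE fun i _ => isUnit_iff_ne_zero.2 (by simp [chebyshevTSequence])

theorem integral_mul_eval_eq_zero_of_degree_le {r : ℝ → ℝ}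
    (hr : ContinuousOn r (Set.Icc (-1) 1)) {n : ℕ}
    (horth : ∀ i ≤ n, ∫ x, r x * (T ℝ i).eval x ∂measureT = 0) {q : ℝ[X]} (hq : q.degree ≤ n) :
    ∫ x, r x * q.eval x ∂measureT = 0 := by
  have hint (p : ℝ[X]) : Integrable (fun x => r x * p.eval x) measureT :=
    integrable_measureT (hr.mul p.continuous.continuousOn)
  rw [← mem_degreeLE, ← span_T_eq_degreeLE] at hq
  induction hq using Submodule.span_induction with
  | mem p hp =>
    obtain ⟨i, hi, rfl⟩ := hp
    exact horth i hi
  | zero => simp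
  | add p p' _ _ hp hp' =>
    simp only [eval_add, mul_add]
    rw [integral_add (hint p) (hint p'), hp, hp', add_zero]
  | smul a p _ hp =>
    simp only [eval_smul, smul_eq_mul, mul_left_comm _ a]
    rw [integral_const_mul, hp, mul_zero]

theorem eqOn_zero_of_integral_measureT_eq_zero {g : ℝ → ℝ}
    (hg : ContinuousOn g (Set.Icc (-1) 1)) (hg0 : ∀ x ∈ Set.Icc (-1 : ℝ) 1, 0 ≤ g x)
    (hint : ∫ x, g x ∂measureT = 0) : Set.EqOn g 0 (Set.Icc (-1) 1) := by
  have hcos : Continuous fun θ => g (Real.cos θ) := hg.comp_continuous Real.continuous_cos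
    fun θ => ⟨Real.neg_one_le_cos θ, Real.cos_le_one θ⟩
  rw [integral_measureT_eq_integral_cos, intervalIntegral.integral_eq_zero_iff_of_le_of_nonneg_ae
    Real.pi_pos.le (ae_of_all _ fun θ => hg0 _ ⟨Real.neg_one_le_cos θ, Real.cos_le_one θ⟩)
    (hcos.intervalIntegrable _ _), Measure.restrict_congr_set Ioc_ae_eq_Icc] at hint
  have hzero := Measure.eqOn_Icc_of_ae_eq volume Real.pi_pos.ne hint hcos.continuousOn
    continuousOn_const
  intro x hx
  simpa [Real.cos_arccos hx.1 hx.2] using hzero ⟨Real.arccos_nonneg x, Real.arccos_le_pi x⟩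

theorem eqOn_zero_of_mul_eval_eq_zero {r : ℝ → ℝ} {a b : ℝ} (hab : a < b)
    (hr : ContinuousOn r (Set.Icc a b)) {q : ℝ[X]} (hq : q ≠ 0)
    (h : ∀ x ∈ Set.Icc a b, r x * q.eval x = 0) : Set.EqOn r 0 (Set.Icc a b) := by
  set D := Set.Ioo a b ∩ (Set.univ \ (q.roots.toFinset : Set ℝ))
  have hdense : Set.Icc a b ⊆ closure D := by
    rw [← closure_Ioo hab.ne]
    exact closure_minimal ((dense_univ.sdiff_finite q.roots.toFinset.finite_toSet)
      |>.open_subset_closure_inter isOpen_Ioo) isClosed_closure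
  refine Set.EqOn.of_subset_closure (fun x hx => ?_) hr continuousOn_const
    (fun x hx => Set.Ioo_subset_Icc_self hx.1) hdense
  have hqx : q.eval x ≠ 0 := fun h0 => hx.2.2 (by simp [hq, h0])
  exact (mul_eq_zero.1 (h x (Set.Ioo_subset_Icc_self hx.1))).resolve_right hqx

/-- A sign chain of length `k + 1` witnesses `k` sign changes of `r` on `s`. -/
def IsSignChain (r : ℝ → ℝ) (s : Set ℝ) (l : List ℝ) : Prop :=
  (∀ x ∈ l, x ∈ s) ∧ l.IsChain fun x y => x < y ∧ r x * r y < 0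

namespace IsSignChain

variable {r : ℝ → ℝ} {s : Set ℝ}

theorem cons {x y : ℝ} {l : List ℝ} (hx : x ∈ s) (hxy : x < y) (hr : r x * r y < 0)
    (h : IsSignChain r s (y :: l)) : IsSignChain r s (x :: y :: l) :=
  ⟨by simpa [hx] using h.1, List.IsChain.cons_cons ⟨hxy, hr⟩ h.2⟩

theorem of_cons {x : ℝ} {l : List ℝ} (h : IsSignChain r s (x :: l)) : IsSignChain r s l :=
  ⟨fun y hy => h.1 y (List.mem_cons_of_mem x hy), h.2.tail⟩

theorem mono {t : Set ℝ} {l : List ℝ} (h : IsSignChain r s l) (hl : ∀ x ∈ l, x ∈ t) :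
    IsSignChain r t l :=
  ⟨hl, h.2⟩

theorem head_le {x y : ℝ} {l : List ℝ} (h : IsSignChain r s (x :: l)) (hy : y ∈ x :: l) :
    x ≤ y := by
  have hlt : (x :: l).Pairwise (· < ·) := (h.2.imp fun _ _ h => h.1).pairwise
  rcases List.mem_cons.1 hy with rfl | hy
  · exact le_rfl
  · exact (List.rel_of_pairwise_cons hlt hy).le

theorem take {l : List ℝ} (h : IsSignChain r s l) (k : ℕ) : IsSignChain r s (l.take k) :=
  ⟨fun x hx => h.1 x (List.mem_of_mem_take hx), h.2.take k⟩

theorem exists_strictMono {l : List ℝ} {k : ℕ} (h : IsSignChain r s l) (hl : l.length = k + 1) :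
    ∃ x : Fin (k + 1) → ℝ, StrictMono x ∧ (∀ j, x j ∈ s) ∧
      ∀ j : Fin k, r (x j.castSucc) * r (x j.succ) < 0 :=
  ⟨fun j => l[j.val], Fin.strictMono_iff_lt_succ.2 fun j => (h.2.getElem j (by omega)).1,
    fun j => h.1 _ (List.getElem_mem _), fun j => (h.2.getElem j (by omega)).2⟩

theorem exists_cons_of_le_length {l : List ℝ} {k : ℕ} (h : IsSignChain r s l)
    (hk : k + 2 ≤ l.length) :
    ∃ z w, r z ≠ 0 ∧ IsSignChain r s (z :: w) ∧ w.length = k + 1 := by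
  have hlen : (l.take (k + 2)).length = k + 2 := by simp; omega
  have hw := h.take (k + 2)
  rcases hu : l.take (k + 2) with _ | ⟨z, _ | ⟨z', w⟩⟩ <;> rw [hu] at hlen hw
  · simp at hlen
  · simp at hlen
  refine ⟨z, z' :: w, left_ne_zero_of_mul (List.isChain_cons_cons.1 hw.2).1.2.ne, hw, ?_⟩
  simpa using hlen

end IsSignChain

theorem exists_isSignChain_pair {r : ℝ → ℝ} {s : Set ℝ} {x y : ℝ} (hx : x ∈ s) (hy : y ∈ s)
    (h : r x * r y < 0) : ∃ w, IsSignChain r s w ∧ w.length = 2 := by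
  rcases lt_trichotomy x y with hxy | rfl | hxy
  · exact ⟨[x, y], IsSignChain.cons hx hxy h ⟨by simpa using hy, .singleton y⟩, rfl⟩
  · exact absurd h (not_lt.2 (mul_self_nonneg _))
  · exact ⟨[y, x], IsSignChain.cons hy hxy (by linarith [mul_comm (r x) (r y)])
      ⟨by simpa using hx, .singleton x⟩, rfl⟩

theorem mul_neg_of_mul_neg_of_mul_pos {R : Type*} [CommRing R] [LinearOrder R]
    [IsStrictOrderedRing R] {a b c : R} (hab : a * b < 0) (hac : 0 < a * c) :
    b * c < 0 := by
  nlinarith [mul_neg_of_neg_of_pos hab hac, sq_nonneg a]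

noncomputable def lastSameSign (r : ℝ → ℝ) (s : Set ℝ) (z z' : ℝ) : ℝ :=
  sSup {y ∈ s | z ≤ y ∧ y ≤ z' ∧ 0 < r z * r y}

section lastSameSign

variable {r : ℝ → ℝ} {s : Set ℝ} {z z' : ℝ}

theorem le_lastSameSign_of_mem {y : ℝ} (hy : y ∈ s) (hzy : z ≤ y) (hyz' : y ≤ z')
    (hr : 0 < r z * r y) : y ≤ lastSameSign r s z z' :=
  le_csSup ⟨z', fun _ hw => hw.2.2.1⟩ ⟨hy, hzy, hyz', hr⟩

theorem exists_of_lt_lastSameSign {y : ℝ} (hz : z ∈ s) (hzz' : z ≤ z') (hrz : r z ≠ 0)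
    (hy : y < lastSameSign r s z z') :
    ∃ w ∈ s, y < w ∧ w ≤ z' ∧ 0 < r z * r w := by
  have hne : {w ∈ s | z ≤ w ∧ w ≤ z' ∧ 0 < r z * r w}.Nonempty :=
    ⟨z, hz, le_rfl, hzz', mul_self_pos.2 hrz⟩
  obtain ⟨w, ⟨hw, -, hwz', hrw⟩, hyw⟩ := exists_lt_of_lt_csSup hne hy
  exact ⟨w, hw, hyw, hwz', hrw⟩

theorem lastSameSign_lt (hr : ContinuousOn r s) (hz : z ∈ s) (hz' : z' ∈ s) (hzz' : z ≤ z')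
    (hrz : r z * r z' < 0) : lastSameSign r s z z' < z' := by
  have hev : ∀ᶠ y in nhdsWithin z' s, r z * r y < 0 :=
    (continuousWithinAt_const.mul (hr z' hz')).eventually (gt_mem_nhds hrz)
  obtain ⟨a, haz', ha⟩ := exists_Ioc_subset_of_mem_nhds (eventually_nhdsWithin_iff.1 hev)
    ⟨z' - 1, by linarith⟩
  refine lt_of_le_of_lt (csSup_le ⟨z, hz, le_rfl, hzz', ?_⟩ fun y ⟨hy, _, hyz', hry⟩ => ?_) haz'
  · exact mul_self_pos.2 (left_ne_zero_of_mul hrz.ne)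
  · by_contra! hay
    exact (ha ⟨hay, hyz'⟩ hy).not_gt hry

end lastSameSign

section MaximalSignChain

variable {r : ℝ → ℝ} {s : Set ℝ} {z z' : ℝ} {l : List ℝ}

/-- A sign change left of `lastSameSign r s z z'` could be inserted into the chain, making it
longer than allowed. -/
theorem mul_nonneg_of_lt_lastSameSign (hl : IsSignChain r s (z :: z' :: l))
    (hmax : ∀ w, IsSignChain r s w → w.length ≤ l.length + 2) {y : ℝ} (hy : y ∈ s)
    (hyt : y < lastSameSign r s z z') : 0 ≤ r z * r y := by
  obtain ⟨hzz', hrzz'⟩ : z < z' ∧ r z * r z' < 0 := (List.isChain_cons_cons.1 hl.2).1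
  by_contra! hneg
  rcases lt_or_ge y z with hyz | hzy
  · have := hmax _ (hl.cons hy hyz (by linarith [mul_comm (r z) (r y)]))
    simp at this
  · obtain ⟨w, hw, hyw, hwz', hrw⟩ :=
      exists_of_lt_lastSameSign (hl.1 z (by simp)) hzz'.le (left_ne_zero_of_mul hrzz'.ne) hyt
    have hwz'' : w < z' := lt_of_le_of_ne hwz' fun h => by subst h; linarith
    have hrwz' : r w * r z' < 0 := by
      rw [mul_comm]
      exact mul_neg_of_mul_neg_of_mul_pos hrzz' hrw
    have := hmax _ ((hl.of_cons.cons hw hwz'' hrwz').cons hy hyw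
      (mul_neg_of_mul_neg_of_mul_pos hneg hrw))
    simp at this

/-- A chain right of `lastSameSign r s z z'` can be prolonged to the left by `z` or by `z'`. -/
theorem length_le_of_isSignChain_inter_Ioi (hl : IsSignChain r s (z :: z' :: l))
    (hmax : ∀ w, IsSignChain r s w → w.length ≤ l.length + 2) {w : List ℝ}
    (hw : IsSignChain r (s ∩ Set.Ioi (lastSameSign r s z z')) w) :
    w.length ≤ l.length + 1 := by
  obtain ⟨hzz', hrzz'⟩ : z < z' ∧ r z * r z' < 0 := (List.isChain_cons_cons.1 hl.2).1
  have hz : z ∈ s := hl.1 z (by simp)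
  have hzt : z ≤ lastSameSign r s z z' :=
    le_lastSameSign_of_mem hz le_rfl hzz'.le (mul_self_pos.2 (left_ne_zero_of_mul hrzz'.ne))
  rcases w with _ | ⟨w₀, _ | ⟨w₁, w⟩⟩
  · simp
  · simp
  obtain ⟨hw₀, htw₀⟩ := hw.1 w₀ (by simp)
  have hrw₀ : r w₀ ≠ 0 := left_ne_zero_of_mul (List.isChain_cons_cons.1 hw.2).1.2.ne
  obtain ⟨p, hp, hpw₀, hrp⟩ : ∃ p ∈ s, p < w₀ ∧ r p * r w₀ < 0 := by
    rcases lt_or_gt_of_ne (mul_ne_zero (left_ne_zero_of_mul hrzz'.ne) hrw₀) with h | h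
    · exact ⟨z, hz, hzt.trans_lt htw₀, h⟩
    · refine ⟨z', hl.1 z' (by simp), lt_of_not_ge fun hw₀z' => ?_,
        mul_neg_of_mul_neg_of_mul_pos hrzz' h⟩
      exact htw₀.not_ge (le_lastSameSign_of_mem hw₀ (hzt.trans htw₀.le) hw₀z' h)
  have := hmax _ ((hw.mono fun x hx => (hw.1 x hx).1).cons hp hpw₀ hrp)
  simp only [List.length_cons] at this ⊢
  omega

end MaximalSignChain

/-- The polynomial is `∏ (tᵢ - X)` over the points `tᵢ = lastSameSign` of the consecutive gaps of
the chain; it is positive left of the chain, which is what glues the induction together. -/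
theorem IsSignChain.exists_poly_of_forall_length_le {r : ℝ → ℝ} {s : Set ℝ} {z : ℝ} {l : List ℝ}
    (hr : ContinuousOn r s) (hl : IsSignChain r s (z :: l))
    (hmax : ∀ w, IsSignChain r s w → w.length ≤ l.length + 1) :
    ∃ q : ℝ[X], q.natDegree ≤ l.length ∧ (∀ y < z, 0 < q.eval y) ∧
      ∀ y ∈ s, 0 ≤ r z * r y * q.eval y := by
  induction l generalizing s z with
  | nil =>
    refine ⟨1, by simp, by simp, fun y hy => ?_⟩
    by_contra! hneg
    obtain ⟨w, hw, hlen⟩ := exists_isSignChain_pair (hl.1 z (by simp)) hy (by simpa using hneg)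
    simpa [hlen] using hmax w hw
  | cons z' l ih =>
    obtain ⟨hzz', hrzz'⟩ : z < z' ∧ r z * r z' < 0 := (List.isChain_cons_cons.1 hl.2).1
    set t := lastSameSign r s z z'
    have hzt : z ≤ t := le_lastSameSign_of_mem (hl.1 z (by simp)) le_rfl hzz'.le
      (mul_self_pos.2 (left_ne_zero_of_mul hrzz'.ne))
    have htz' : t < z' := lastSameSign_lt hr (hl.1 z (by simp)) (hl.1 z' (by simp)) hzz'.le hrzz'
    obtain ⟨q, hqdeg, hqpos, hq⟩ := ih (hr.mono Set.inter_subset_left)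
      (hl.of_cons.mono fun x hx => ⟨hl.of_cons.1 x hx, htz'.trans_le (hl.of_cons.head_le hx)⟩)
      fun w hw => length_le_of_isSignChain_inter_Ioi hl hmax hw
    refine ⟨(C t - X) * q, ?_, fun y hy => ?_, fun y hy => ?_⟩
    · have : (C t - X).natDegree ≤ 1 := by compute_degree
      have := natDegree_mul_le (p := C t - X) (q := q)
      simp only [List.length_cons]
      omega
    · simp only [eval_mul, eval_sub, eval_C, eval_X]
      exact mul_pos (by linarith) (hqpos y (by linarith))
    simp only [eval_mul, eval_sub, eval_C, eval_X]
    rcases lt_trichotomy y t with hyt | rfl | hty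
    · exact mul_nonneg (mul_nonneg_of_lt_lastSameSign hl hmax hy hyt)
        (mul_nonneg (by linarith) (hqpos y (by linarith)).le)
    · simp
    · have key : r z * r y * ((t - y) * q.eval y) * (r z' * r z') =
          (r z * r z') * (t - y) * (r z' * r y * q.eval y) := by ring
      refine nonneg_of_mul_nonneg_left ?_ (mul_self_pos.2 (right_ne_zero_of_mul hrzz'.ne))
      rw [key]
      exact mul_nonneg (mul_nonneg_of_nonpos_of_nonpos hrzz'.le (by linarith)) (hq y ⟨hy, hty⟩)

theorem exists_poly_mul_nonneg_of_forall_length_le {r : ℝ → ℝ} {s : Set ℝ} {n : ℕ}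
    (hr : ContinuousOn r s) (hmax : ∀ w, IsSignChain r s w → w.length ≤ n + 1) :
    ∃ q : ℝ[X], q ≠ 0 ∧ q.natDegree ≤ n ∧ ∀ y ∈ s, 0 ≤ r y * q.eval y := by
  by_cases h0 : ∀ y ∈ s, r y = 0
  · exact ⟨1, one_ne_zero, by simp, fun y hy => by simp [h0 y hy]⟩
  push Not at h0
  obtain ⟨x₀, hx₀, hrx₀⟩ := h0
  classical
  let HasChain (k : ℕ) : Prop := ∃ z w, r z ≠ 0 ∧ IsSignChain r s (z :: w) ∧ w.length = k
  have hk : HasChain (Nat.findGreatest HasChain n) :=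
    Nat.findGreatest_spec (Nat.zero_le n) ⟨x₀, [], hrx₀, ⟨by simpa using hx₀, .singleton _⟩, rfl⟩
  obtain ⟨z, l, hrz, hl, hlen⟩ := hk
  have hmax' : ∀ w, IsSignChain r s w → w.length ≤ l.length + 1 := by
    intro w hw
    by_contra! hlong
    have hle : l.length + 1 ≤ n := by linarith [hmax w hw]
    have := Nat.le_findGreatest (P := HasChain) hle (hw.exists_cons_of_le_length hlong)
    omega
  obtain ⟨q, hqdeg, hqpos, hq⟩ := hl.exists_poly_of_forall_length_le hr hmax'
  refine ⟨C (r z) * q, fun h => ?_, ?_, fun y hy => ?_⟩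
  · have := congrArg (eval (z - 1)) h
    simp only [eval_mul, eval_C, eval_zero] at this
    exact mul_ne_zero hrz (hqpos (z - 1) (by linarith)).ne' this
  · exact (natDegree_C_mul_le _ _).trans (hlen ▸ hqdeg |>.trans (Nat.findGreatest_le n))
  · simpa [mul_left_comm (r y), mul_assoc] using hq y hy

/-- Sign changes of the remainder of the Fourier–Chebyshev partial sum:
either f coincides with its partial sum P_n on [-1,1], or f − P_n changes sign
at least n + 1 times on [-1,1]. -/
theorem fourier_chebyshev_remainder_sign_changes
    (f : ℝ → ℝ) (hf : ContinuousOn f (Set.Icc (-1 : ℝ) 1)) (n : ℕ)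
    (c : ℕ → ℝ)
    (hc0 : c 0 = (1 / Real.pi) *
      ∫ x in Set.Icc (-1 : ℝ) 1, f x * (1 / Real.sqrt (1 - x ^ 2)))
    (hci : ∀ i : ℕ, 1 ≤ i → i ≤ n → c i = (2 / Real.pi) *
      ∫ x in Set.Icc (-1 : ℝ) 1, f x * (T ℝ i).eval x * (1 / Real.sqrt (1 - x ^ 2)))
    (P : ℝ → ℝ)
    (hP : ∀ x, P x = ∑ i ∈ Finset.range (n + 1), c i * (T ℝ i).eval x) :
    (∀ x ∈ Set.Icc (-1 : ℝ) 1, f x = P x) ∨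
      ∃ x : Fin (n + 2) → ℝ, StrictMono x ∧ (∀ j, x j ∈ Set.Icc (-1 : ℝ) 1) ∧
        ∀ j : Fin (n + 1),
          (f (x j.castSucc) - P (x j.castSucc)) * (f (x j.succ) - P (x j.succ)) < 0 := by
  have hr : ContinuousOn (fun x => f x - P x) (Set.Icc (-1) 1) :=
    hf.sub (by rw [funext hP]; fun_prop)
  refine or_iff_not_imp_right.2 fun hno x hx => sub_eq_zero.1 ?_
  have hmax : ∀ w, IsSignChain (fun x => f x - P x) (Set.Icc (-1) 1) w → w.length ≤ n + 1 := by
    intro w hw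
    by_contra! hlong
    exact hno ((hw.take (n + 2)).exists_strictMono (by simp; omega))
  obtain ⟨q, hq0, hqdeg, hrq⟩ := exists_poly_mul_nonneg_of_forall_length_le hr hmax
  have horth := integral_mul_eval_eq_zero_of_degree_le hr
    (fun i hi => integral_sub_partialSum_mul_T_eq_zero hf hc0 hci hP hi)
    (degree_le_of_natDegree_le hqdeg)
  exact eqOn_zero_of_mul_eval_eq_zero (by norm_num) hr hq0
    (eqOn_zero_of_integral_measureT_eq_zero (hr.mul q.continuous.continuousOn) hrq horth) hx
end
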